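/- arXiv:math/0112251 — 3 statements merged into one kernel-verified Lean document; each statement's English description precedes it below -/
import Mathlib

section
/- Let Δ^P ⊆ Δ, let λ ∈ V be dominant, let w ∈ W_P, and set μ := w(λ + ρ) − ρ. Then: (i) ⟨wλ, γ∨⟩ ≥ 0 and ⟨wρ − ρ, γ∨⟩ ≥ 0 for every γ ∈ Φ^P ∩ Φ⁺; in particular ⟨μ, γ∨⟩ ≥ 0 for every γ ∈ Φ^P ∩ Φ⁺; and (ii) for every γ ∈ Φ^P, if ⟨μ, γ∨⟩ = 0 then ⟨wλ, γ∨⟩ = 0 and ⟨wρ − ρ, γ∨⟩ = 0. -/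
noncomputable section

open scoped RealInnerProductSpace

variable {V : Type*} [NormedAddCommGroup V] [InnerProductSpace ℝ V] [FiniteDimensional ℝ V]

/-- The reflection in the vector `γ` (as a function). -/
def sRefl (γ v : V) : V := v - (2 * ⟪v, γ⟫ / ⟪γ, γ⟫) • γ

/-- The coroot `γ∨ = 2γ/⟨γ,γ⟩` of `γ`. -/
def coroot (γ : V) : V := (2 / ⟪γ, γ⟫) • γ

/-- The Weyl group `W`: the subgroup of linear automorphisms generated by the
reflections in the roots. -/
def weylGroup (Φ : Finset V) : Subgroup (V ≃ₗ[ℝ] V) :=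
  Subgroup.closure {w : V ≃ₗ[ℝ] V | ∃ γ ∈ Φ, ∀ v, w v = sRefl γ v}

/-- `Φ_w = {γ ∈ Φ⁺ : w⁻¹ γ ∈ −Φ⁺}`. -/
def inversions (Φpos : Finset V) (w : V ≃ₗ[ℝ] V) : Set V :=
  {γ | γ ∈ Φpos ∧ -(w.symm γ) ∈ Φpos}

/-- `ℓ(w) = #Φ_w`. -/
def len (Φpos : Finset V) (w : V ≃ₗ[ℝ] V) : ℕ := (inversions Φpos w).ncard

/-- `Φ^P = Φ ∩ span(Δ^P)`. -/
def levi (Φ ΔP : Finset V) : Set V :=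
  {γ | γ ∈ Φ ∧ γ ∈ Submodule.span ℝ (ΔP : Set V)}

/-- `W_P = {w ∈ W : Φ_w ∩ Φ^P = ∅}`, the minimal length coset representatives of `W^P\W`. -/
def minimalCosetReps (Φ Φpos ΔP : Finset V) : Set (V ≃ₗ[ℝ] V) :=
  {w | w ∈ weylGroup Φ ∧ inversions Φpos w ∩ levi Φ ΔP = ∅}

/-- `pr_S`: the orthogonal projection onto the orthogonal complement of `span S`. -/
def pr (S : Set V) (v : V) : V :=
  (Submodule.orthogonalProjectionOnto (Submodule.span ℝ S)ᗮ v : V)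

/-- `Φ` is a finite (possibly non-reduced) root system spanning `V`, with base `Δ`
and associated positive system `Φpos`. -/
structure IsRootBase (Φ Δ Φpos : Finset V) : Prop where
  span_top : Submodule.span ℝ (Φ : Set V) = ⊤
  zero_not_mem : (0 : V) ∉ Φ
  refl_mem : ∀ γ ∈ Φ, ∀ δ ∈ Φ, sRefl γ δ ∈ Φ
  base_subset_pos : (Δ : Set V) ⊆ (Φpos : Set V)
  pos_subset : (Φpos : Set V) ⊆ (Φ : Set V)
  mem_or_neg_mem : ∀ γ ∈ Φ, γ ∈ Φpos ∨ -γ ∈ Φpos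
  not_mem_and_neg_mem : ∀ γ ∈ Φpos, -γ ∉ Φpos
  indep : LinearIndependent ℝ (fun x : (Δ : Set V) => (x : V))
  pos_comb : ∀ γ ∈ Φpos, ∃ c : V → ℝ, (∀ α ∈ Δ, 0 ≤ c α) ∧ γ = ∑ α ∈ Δ, c α • α

/-!
Since `ρ − wρ` is the sum of the inversions `Φ_w`, it suffices to show `⟨Σ_{δ ∈ Φ_w} δ, α⟩ ≤ 0`
for `α ∈ Δ^P`. The reflection `s_α` pairs off the inversions `δ` with `s_α δ ∈ Φ_w`, and their
contributions cancel. Any other inversion `δ` with `⟨δ, α⟩ > 0` lies outside `Φ^P`, so it is not a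
multiple of `α`, and `s_α δ = δ − kα` (`k > 0`) is a positive root that is not an inversion. Then
`w⁻¹(s_α δ) − w⁻¹δ = −k w⁻¹α` lies both in the cone spanned by `Δ` and in its negative, since
`w ∈ W_P` keeps `w⁻¹α` positive; this cone is pointed because `Δ` is linearly independent.
Positive roots of the Levi are nonnegative combinations of `Δ^P`, so `⟨wρ − ρ, γ⟩ ≥ 0` for them,
and `⟨wλ, γ⟩ = ⟨λ, w⁻¹γ⟩ ≥ 0` because `w⁻¹γ` is positive. Both summands of `⟨μ, γ∨⟩` thus have
the sign of `γ`, so they vanish when it does.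
-/

namespace PointedCone

variable {M : Type*} [AddCommGroup M] [Module ℝ M]

theorem mem_hull_of_add_mem_span {S T : Finset M} (hS : LinearIndepOn ℝ id (S : Set M))
    (hTS : T ⊆ S) {x y : M} (hx : x ∈ hull ℝ (S : Set M)) (hy : y ∈ hull ℝ (S : Set M))
    (hxy : x + y ∈ Submodule.span ℝ (T : Set M)) : x ∈ hull ℝ (T : Set M) := by
  classical
  obtain ⟨a, -, rfl⟩ := Submodule.mem_span_finset.1 hx
  obtain ⟨b, -, rfl⟩ := Submodule.mem_span_finset.1 hy
  obtain ⟨d, hdT, hd⟩ := Submodule.mem_span_finset.1 hxy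
  have hd_off : ∀ α ∉ T, d α = 0 := fun α hα => Function.notMem_support.1 fun h => hα (hdT h)
  have hdS : ∑ α ∈ S, d α • α = ∑ α ∈ T, d α • α :=
    (Finset.sum_subset hTS fun α _ hα => by rw [hd_off α hα, zero_smul]).symm
  have hcoeff : ∀ α ∈ S, ((a α : ℝ) + b α - d α) = 0 := by
    refine linearIndepOn_iff'.1 hS S _ subset_rfl ?_
    simp only [id, sub_smul, add_smul, Finset.sum_sub_distrib, Finset.sum_add_distrib,
      Nonneg.coe_smul, hdS, hd, sub_self]
  have ha_off : ∀ α ∈ S, α ∉ T → a α = 0 := fun α hα hαT => by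
    have := hcoeff α hα
    rw [hd_off α hαT] at this
    exact Subtype.ext (show (a α : ℝ) = 0 by linarith [(a α).2, (b α).2])
  rw [← Finset.sum_subset hTS fun α hα hαT => by rw [ha_off α hα hαT, zero_smul]]
  exact Submodule.sum_mem _ fun α hα => Submodule.smul_mem _ _ (Submodule.subset_span hα)

theorem eq_zero_of_add_eq_zero {S : Finset M} (hS : LinearIndepOn ℝ id (S : Set M)) {x y : M}
    (hx : x ∈ hull ℝ (S : Set M)) (hy : y ∈ hull ℝ (S : Set M)) (hxy : x + y = 0) : x = 0 := by
  simpa using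
    mem_hull_of_add_mem_span hS (Finset.empty_subset S) hx hy (hxy ▸ Submodule.zero_mem _)

end PointedCone

section Coroots

variable {V : Type*} [NormedAddCommGroup V] [InnerProductSpace ℝ V]

theorem inner_nonneg_of_mem_hull {S : Set V} {v x : V} (hS : ∀ α ∈ S, 0 ≤ ⟪v, α⟫)
    (hx : x ∈ PointedCone.hull ℝ S) : 0 ≤ ⟪v, x⟫ := by
  induction hx using Submodule.span_induction with
  | mem α hα => exact hS α hα
  | zero => simp
  | add x y _ _ hx hy => rw [inner_add_right]; exact add_nonneg hx hy
  | smul c x _ hx => rw [← Nonneg.coe_smul, real_inner_smul_right]; exact mul_nonneg c.2 hx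

theorem coroot_neg (γ : V) : coroot (-γ) = -coroot γ := by
  rw [coroot, coroot, inner_neg_neg, smul_neg]

theorem inner_coroot_nonneg_iff {γ : V} (hγ : γ ≠ 0) (v : V) :
    0 ≤ ⟪v, coroot γ⟫ ↔ 0 ≤ ⟪v, γ⟫ := by
  have : 0 < 2 / ⟪γ, γ⟫ := div_pos two_pos (real_inner_self_pos.2 hγ)
  rw [coroot, real_inner_smul_right, mul_nonneg_iff_of_pos_left this]

theorem inner_sRefl_left_self (γ v : V) : ⟪sRefl γ v, γ⟫ = -⟪v, γ⟫ := by
  rcases eq_or_ne γ 0 with rfl | hγ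
  · simp
  · have := (real_inner_self_pos.2 hγ).ne'
    rw [sRefl, inner_sub_left, real_inner_smul_left]
    field_simp
    ring

theorem sRefl_sRefl (γ v : V) : sRefl γ (sRefl γ v) = v := by
  rw [sRefl, inner_sRefl_left_self, sRefl]
  module

theorem inner_sRefl_sRefl (γ u v : V) : ⟪sRefl γ u, sRefl γ v⟫ = ⟪u, v⟫ := by
  rcases eq_or_ne γ 0 with rfl | hγ
  · simp [sRefl]
  · have := (real_inner_self_pos.2 hγ).ne'
    simp only [sRefl, inner_sub_left, inner_sub_right, real_inner_smul_left,
      real_inner_smul_right, real_inner_comm γ v]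
    field_simp
    ring

end Coroots

section WeylGroup

variable {V : Type*} [NormedAddCommGroup V] [InnerProductSpace ℝ V]

def rootIsometryGroup (Φ : Finset V) : Subgroup (V ≃ₗ[ℝ] V) where
  carrier := {w | (∀ u v, ⟪w u, w v⟫ = ⟪u, v⟫) ∧ ∀ γ, w γ ∈ Φ ↔ γ ∈ Φ}
  mul_mem' {w w'} hw hw' := ⟨fun u v => (hw.1 _ _).trans (hw'.1 u v),
    fun γ => (hw.2 _).trans (hw'.2 γ)⟩
  one_mem' := ⟨fun _ _ => rfl, fun _ => Iff.rfl⟩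
  inv_mem' {w} hw := ⟨fun u v => by
      simpa only [LinearEquiv.coe_inv, LinearEquiv.apply_symm_apply] using
        (hw.1 (w.symm u) (w.symm v)).symm,
    fun γ => by simpa only [LinearEquiv.coe_inv, LinearEquiv.apply_symm_apply] using
        (hw.2 (w.symm γ)).symm⟩

theorem weylGroup_le_rootIsometryGroup {Φ : Finset V}
    (hΦ : ∀ γ ∈ Φ, ∀ δ ∈ Φ, sRefl γ δ ∈ Φ) : weylGroup Φ ≤ rootIsometryGroup Φ := by
  refine Subgroup.closure_le _ |>.2 ?_
  rintro w ⟨γ, hγ, hw⟩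
  refine ⟨fun u v => by rw [hw, hw, inner_sRefl_sRefl], fun δ => ⟨fun h => ?_, fun h => ?_⟩⟩
  · rw [← sRefl_sRefl γ δ, ← hw δ]
    exact hΦ γ hγ _ h
  · rw [hw]
    exact hΦ γ hγ δ h

end WeylGroup

namespace IsRootBase

variable {V : Type*} [NormedAddCommGroup V] [InnerProductSpace ℝ V] {Φ Δ Φpos : Finset V}

theorem ne_zero (h : IsRootBase Φ Δ Φpos) {γ : V} (hγ : γ ∈ Φ) : γ ≠ 0 :=
  fun h0 => h.zero_not_mem (h0 ▸ hγ)

theorem mem_hull (h : IsRootBase Φ Δ Φpos) {γ : V} (hγ : γ ∈ Φpos) :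
    γ ∈ PointedCone.hull ℝ (Δ : Set V) := by
  obtain ⟨c, hc, rfl⟩ := h.pos_comb γ hγ
  exact Submodule.sum_mem _ fun α hα =>
    (PointedCone.hull ℝ _).smul_mem (hc α hα) (PointedCone.subset_hull hα)

theorem sRefl_mem_pos (h : IsRootBase Φ Δ Φpos) {α δ : V} (hα : α ∈ Δ) (hδ : δ ∈ Φpos)
    (hδα : δ ∉ ℝ ∙ α) : sRefl α δ ∈ Φpos := by
  have hs : sRefl α δ ∈ Φ :=
    h.refl_mem α (h.pos_subset (h.base_subset_pos hα)) δ (h.pos_subset hδ)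
  refine (h.mem_or_neg_mem _ hs).resolve_right fun hneg => hδα ?_
  have hsum : δ + -sRefl α δ ∈ Submodule.span ℝ ((({α} : Finset V)) : Set V) := by
    rw [sRefl, neg_sub, add_sub_cancel, Finset.coe_singleton]
    exact Submodule.smul_mem _ _ (Submodule.mem_span_singleton_self α)
  simpa using PointedCone.hull_le_span ℝ _ <| PointedCone.mem_hull_of_add_mem_span h.indep
    (Finset.singleton_subset_iff.2 hα) (h.mem_hull hδ) (h.mem_hull hneg) hsum

theorem inner_map_map (h : IsRootBase Φ Δ Φpos) {w : V ≃ₗ[ℝ] V} (hw : w ∈ weylGroup Φ)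
    (u v : V) : ⟪w u, w v⟫ = ⟪u, v⟫ :=
  (weylGroup_le_rootIsometryGroup h.refl_mem hw).1 u v

theorem map_mem_iff (h : IsRootBase Φ Δ Φpos) {w : V ≃ₗ[ℝ] V} (hw : w ∈ weylGroup Φ)
    {γ : V} : w γ ∈ Φ ↔ γ ∈ Φ :=
  (weylGroup_le_rootIsometryGroup h.refl_mem hw).2 γ

theorem symm_mem_iff (h : IsRootBase Φ Δ Φpos) {w : V ≃ₗ[ℝ] V} (hw : w ∈ weylGroup Φ)
    {γ : V} : w.symm γ ∈ Φ ↔ γ ∈ Φ := by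
  simpa using (h.map_mem_iff hw (γ := w.symm γ)).symm

end IsRootBase

section Inversions

variable {V : Type*} [NormedAddCommGroup V] [InnerProductSpace ℝ V]

def weylVector (Φpos : Finset V) : V := (2⁻¹ : ℝ) • ∑ γ ∈ Φpos, γ

open Classical in
def inversionFinset (Φpos : Finset V) (w : V ≃ₗ[ℝ] V) : Finset V :=
  Φpos.filter fun γ => -(w.symm γ) ∈ Φpos

theorem mem_inversionFinset {Φpos : Finset V} {w : V ≃ₗ[ℝ] V} {γ : V} :
    γ ∈ inversionFinset Φpos w ↔ γ ∈ inversions Φpos w := by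
  simp [inversionFinset, inversions]

variable {Φ Δ Φpos : Finset V}

theorem symm_mem_pos_of_mem_levi (h : IsRootBase Φ Δ Φpos) {ΔP : Finset V} {w : V ≃ₗ[ℝ] V}
    (hw : w ∈ minimalCosetReps Φ Φpos ΔP) {γ : V} (hγ : γ ∈ levi Φ ΔP) (hγpos : γ ∈ Φpos) :
    w.symm γ ∈ Φpos := by
  refine (h.mem_or_neg_mem _ ((h.symm_mem_iff hw.1).2 (h.pos_subset hγpos))).resolve_right
    fun hneg => ?_
  have : γ ∈ inversions Φpos w ∩ levi Φ ΔP := ⟨⟨hγpos, hneg⟩, hγ⟩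
  rwa [hw.2] at this

open Classical in
theorem image_pos_eq_sdiff_union_neg (h : IsRootBase Φ Δ Φpos) {w : V ≃ₗ[ℝ] V}
    (hw : w ∈ weylGroup Φ) :
    Φpos.image w = (Φpos \ inversionFinset Φpos w) ∪ (inversionFinset Φpos w).image Neg.neg := by
  ext γ
  simp only [Finset.mem_image, Finset.mem_union, Finset.mem_sdiff, mem_inversionFinset,
    inversions, Set.mem_ofPred_eq, map_neg, neg_neg, neg_eq_iff_eq_neg, exists_eq_right]
  constructor
  · rintro ⟨β, hβ, rfl⟩
    rw [LinearEquiv.symm_apply_apply]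
    rcases h.mem_or_neg_mem _ ((h.map_mem_iff hw).2 (h.pos_subset hβ)) with hpos | hneg
    · exact .inl ⟨hpos, fun hinv => h.not_mem_and_neg_mem β hβ hinv.2⟩
    · exact .inr ⟨hneg, hβ⟩
  · have hpos_of : w.symm γ ∈ Φpos → ∃ β ∈ Φpos, w β = γ :=
      fun hγ' => ⟨w.symm γ, hγ', w.apply_symm_apply γ⟩
    rintro (⟨hγ, hninv⟩ | ⟨-, hγ'⟩)
    · exact hpos_of <| (h.mem_or_neg_mem _ ((h.symm_mem_iff hw).2 (h.pos_subset hγ))).resolve_right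
        fun hneg => hninv ⟨hγ, hneg⟩
    · exact hpos_of hγ'

theorem map_weylVector_sub_weylVector (h : IsRootBase Φ Δ Φpos) {w : V ≃ₗ[ℝ] V}
    (hw : w ∈ weylGroup Φ) :
    w (weylVector Φpos) - weylVector Φpos = -∑ δ ∈ inversionFinset Φpos w, δ := by
  classical
  have hsub : inversionFinset Φpos w ⊆ Φpos := Finset.filter_subset _ _
  have hdisj :
      Disjoint (Φpos \ inversionFinset Φpos w) ((inversionFinset Φpos w).image Neg.neg) :=
    Finset.disjoint_left.2 fun γ hγ hγ' => by
      obtain ⟨δ, hδ, rfl⟩ := Finset.mem_image.1 hγ'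
      exact h.not_mem_and_neg_mem δ (hsub hδ) (Finset.mem_sdiff.1 hγ).1
  have hsum : ∑ β ∈ Φpos, w β =
      ∑ γ ∈ Φpos, γ - ∑ δ ∈ inversionFinset Φpos w, δ - ∑ δ ∈ inversionFinset Φpos w, δ := by
    have himage : ∑ β ∈ Φpos, w β = ∑ γ ∈ Φpos.image w, γ :=
      (Finset.sum_image (f := id) fun _ _ _ _ h => w.injective h).symm
    rw [himage, image_pos_eq_sdiff_union_neg h hw,
      Finset.sum_union hdisj, Finset.sum_sdiff_eq_sub hsub,
      Finset.sum_image fun _ _ _ _ h => neg_injective h, Finset.sum_neg_distrib]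
    abel
  rw [weylVector, map_smul, map_sum, hsum]
  module

theorem inner_nonpos_of_mem_inversionFinset (h : IsRootBase Φ Δ Φpos) {ΔP : Finset V}
    (hΔP : ΔP ⊆ Δ) {w : V ≃ₗ[ℝ] V} (hw : w ∈ minimalCosetReps Φ Φpos ΔP) {α δ : V}
    (hα : α ∈ ΔP) (hδ : δ ∈ inversionFinset Φpos w) (hsδ : sRefl α δ ∉ inversionFinset Φpos w) :
    ⟪δ, α⟫ ≤ 0 := by
  by_contra! hδα
  obtain ⟨hδpos, hδneg⟩ := mem_inversionFinset.1 hδ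
  have hαpos : α ∈ Φpos := h.base_subset_pos (hΔP hα)
  have hδ_not_mem_span : δ ∉ ℝ ∙ α := fun hmem => by
    have : δ ∈ inversions Φpos w ∩ levi Φ ΔP := ⟨⟨hδpos, hδneg⟩, h.pos_subset hδpos,
      Submodule.span_mono (Set.singleton_subset_iff.2 hα) hmem⟩
    rwa [hw.2] at this
  have hsδpos := h.sRefl_mem_pos (hΔP hα) hδpos hδ_not_mem_span
  have hwsδ : w.symm (sRefl α δ) ∈ Φpos :=
    (h.mem_or_neg_mem _ ((h.symm_mem_iff hw.1).2 (h.pos_subset hsδpos))).resolve_right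
      fun hneg => hsδ (mem_inversionFinset.2 ⟨hsδpos, hneg⟩)
  have hwα : w.symm α ∈ Φpos := symm_mem_pos_of_mem_levi h hw
    ⟨h.pos_subset hαpos, Submodule.subset_span hα⟩ hαpos
  have hk : 0 < 2 * ⟪δ, α⟫ / ⟪α, α⟫ :=
    div_pos (by linarith) (real_inner_self_pos.2 (h.ne_zero (h.pos_subset hαpos)))
  have hzero : (2 * ⟪δ, α⟫ / ⟪α, α⟫) • w.symm α = 0 := by
    refine PointedCone.eq_zero_of_add_eq_zero h.indep
      ((PointedCone.hull ℝ _).smul_mem hk.le (h.mem_hull hwα))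
      (add_mem (h.mem_hull hwsδ) (h.mem_hull hδneg)) ?_
    rw [sRefl, map_sub, map_smul]
    abel
  exact (smul_ne_zero hk.ne' (h.ne_zero (h.pos_subset hwα))) hzero

theorem inner_sum_inversionFinset_nonpos (h : IsRootBase Φ Δ Φpos) {ΔP : Finset V}
    (hΔP : ΔP ⊆ Δ) {w : V ≃ₗ[ℝ] V} (hw : w ∈ minimalCosetReps Φ Φpos ΔP) {α : V}
    (hα : α ∈ ΔP) : ⟪∑ δ ∈ inversionFinset Φpos w, δ, α⟫ ≤ 0 := by
  classical
  set I := inversionFinset Φpos w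
  rw [sum_inner, ← Finset.sum_filter_add_sum_filter_not I fun δ => sRefl α δ ∈ I]
  have hpairs : ∑ δ ∈ I.filter (fun δ => sRefl α δ ∈ I), ⟪δ, α⟫ = 0 := by
    refine Finset.sum_involution (fun δ _ => sRefl α δ) (fun δ _ => ?_) (fun δ _ hδ hfix => ?_)
      (fun δ hδ => ?_) (fun δ _ => sRefl_sRefl α δ)
    · rw [inner_sRefl_left_self, add_neg_cancel]
    · have := inner_sRefl_left_self α δ
      rw [hfix] at this
      exact hδ (by linarith)
    · simp only [Finset.mem_filter, sRefl_sRefl] at hδ ⊢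
      exact ⟨hδ.2, hδ.1⟩
  rw [hpairs, zero_add]
  exact Finset.sum_nonpos fun δ hδ => by
    rw [Finset.mem_filter] at hδ
    exact inner_nonpos_of_mem_inversionFinset h hΔP hw hα hδ.1 hδ.2

theorem inner_map_weylVector_sub_weylVector_nonneg (h : IsRootBase Φ Δ Φpos) {ΔP : Finset V}
    (hΔP : ΔP ⊆ Δ) {w : V ≃ₗ[ℝ] V} (hw : w ∈ minimalCosetReps Φ Φpos ΔP) {γ : V}
    (hγ : γ ∈ levi Φ ΔP) (hγpos : γ ∈ Φpos) :
    0 ≤ ⟪w (weylVector Φpos) - weylVector Φpos, γ⟫ := by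
  have hγP : γ ∈ PointedCone.hull ℝ (ΔP : Set V) :=
    PointedCone.mem_hull_of_add_mem_span h.indep hΔP (h.mem_hull hγpos) (zero_mem _)
      (by simpa using hγ.2)
  refine inner_nonneg_of_mem_hull (fun α hα => ?_) hγP
  rw [map_weylVector_sub_weylVector h hw.1, inner_neg_left, neg_nonneg]
  exact inner_sum_inversionFinset_nonpos h hΔP hw hα

theorem inner_map_nonneg_of_dominant (h : IsRootBase Φ Δ Φpos) {ΔP : Finset V}
    {w : V ≃ₗ[ℝ] V} (hw : w ∈ minimalCosetReps Φ Φpos ΔP) {lam : V}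
    (hdom : ∀ α ∈ Δ, 0 ≤ ⟪lam, coroot α⟫) {γ : V} (hγ : γ ∈ levi Φ ΔP) (hγpos : γ ∈ Φpos) :
    0 ≤ ⟪w lam, γ⟫ := by
  rw [← w.apply_symm_apply γ, h.inner_map_map hw.1]
  refine inner_nonneg_of_mem_hull (fun α hα => ?_)
    (h.mem_hull (symm_mem_pos_of_mem_levi h hw hγ hγpos))
  exact (inner_coroot_nonneg_iff (h.ne_zero (h.pos_subset (h.base_subset_pos hα))) lam).1
    (hdom α hα)

end Inversions

theorem orthogonalityOfKostantWeights_general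
    {V : Type*} [NormedAddCommGroup V] [InnerProductSpace ℝ V]
    (Φ Δ Φpos : Finset V) (h : IsRootBase Φ Δ Φpos)
    (ΔP : Finset V) (hΔP : ΔP ⊆ Δ)
    (lam : V) (hdom : ∀ α ∈ Δ, 0 ≤ ⟪lam, coroot α⟫)
    (w : V ≃ₗ[ℝ] V) (hw : w ∈ minimalCosetReps Φ Φpos ΔP)
    (ρ : V) (hρ : ρ = (2⁻¹ : ℝ) • ∑ γ ∈ Φpos, γ)
    (μ : V) (hμ : μ = w (lam + ρ) - ρ) :
    (∀ γ ∈ levi Φ ΔP ∩ (Φpos : Set V),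
        0 ≤ ⟪w lam, coroot γ⟫ ∧ 0 ≤ ⟪w ρ - ρ, coroot γ⟫ ∧ 0 ≤ ⟪μ, coroot γ⟫) ∧
    (∀ γ ∈ levi Φ ΔP, ⟪μ, coroot γ⟫ = 0 →
        ⟪w lam, coroot γ⟫ = 0 ∧ ⟪w ρ - ρ, coroot γ⟫ = 0) := by
  replace hρ : ρ = weylVector Φpos := hρ
  have hμ_split : ∀ γ, ⟪μ, coroot γ⟫ = ⟪w lam, coroot γ⟫ + ⟪w ρ - ρ, coroot γ⟫ := fun γ => by
    rw [hμ, map_add, add_sub_assoc, inner_add_left]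
  have hpos : ∀ γ ∈ levi Φ ΔP ∩ (Φpos : Set V),
      0 ≤ ⟪w lam, coroot γ⟫ ∧ 0 ≤ ⟪w ρ - ρ, coroot γ⟫ := by
    rintro γ ⟨hγ, hγpos⟩
    have hγ0 := h.ne_zero (h.pos_subset hγpos)
    rw [inner_coroot_nonneg_iff hγ0, inner_coroot_nonneg_iff hγ0, hρ]
    exact ⟨inner_map_nonneg_of_dominant h hw hdom hγ hγpos,
      inner_map_weylVector_sub_weylVector_nonneg h hΔP hw hγ hγpos⟩
  refine ⟨fun γ hγ => ⟨(hpos γ hγ).1, (hpos γ hγ).2, ?_⟩, fun γ hγ hμ0 => ?_⟩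
  · rw [hμ_split]
    exact add_nonneg (hpos γ hγ).1 (hpos γ hγ).2
  rw [hμ_split] at hμ0
  rcases h.mem_or_neg_mem γ hγ.1 with hγpos | hγneg
  · have := hpos γ ⟨hγ, hγpos⟩
    constructor <;> linarith
  · have := hpos (-γ) ⟨⟨h.pos_subset hγneg, neg_mem hγ.2⟩, hγneg⟩
    rw [coroot_neg, inner_neg_right, inner_neg_right] at this
    constructor <;> linarith

/-- key orthogonality claim in Lemma 11.4 of the paper.
For `λ` dominant, `w ∈ W_P` and `μ = w(λ+ρ) − ρ`:
(i) `⟨wλ, γ∨⟩ ≥ 0`, `⟨wρ − ρ, γ∨⟩ ≥ 0` (hence `⟨μ, γ∨⟩ ≥ 0`) for every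
`γ ∈ Φ^P ∩ Φ⁺`; and (ii) for `γ ∈ Φ^P`, `⟨μ, γ∨⟩ = 0` implies
`⟨wλ, γ∨⟩ = 0` and `⟨wρ − ρ, γ∨⟩ = 0`. -/
theorem orthogonalityOfKostantWeights
    {V : Type*} [NormedAddCommGroup V] [InnerProductSpace ℝ V] [FiniteDimensional ℝ V]
    (Φ Δ Φpos : Finset V) (h : IsRootBase Φ Δ Φpos)
    (ΔP : Finset V) (hΔP : ΔP ⊆ Δ)
    (lam : V) (hdom : ∀ α ∈ Δ, 0 ≤ ⟪lam, coroot α⟫)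
    (w : V ≃ₗ[ℝ] V) (hw : w ∈ minimalCosetReps Φ Φpos ΔP)
    (ρ : V) (hρ : ρ = (2⁻¹ : ℝ) • ∑ γ ∈ Φpos, γ)
    (μ : V) (hμ : μ = w (lam + ρ) - ρ) :
    (∀ γ ∈ levi Φ ΔP ∩ (Φpos : Set V),
        0 ≤ ⟪w lam, coroot γ⟫ ∧ 0 ≤ ⟪w ρ - ρ, coroot γ⟫ ∧ 0 ≤ ⟪μ, coroot γ⟫) ∧
    (∀ γ ∈ levi Φ ΔP, ⟪μ, coroot γ⟫ = 0 →
        ⟪w lam, coroot γ⟫ = 0 ∧ ⟪w ρ - ρ, coroot γ⟫ = 0) :=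
  orthogonalityOfKostantWeights_general Φ Δ Φpos h ΔP hΔP lam hdom w hw ρ hρ μ hμ
end
end

section
/- Let S ⊆ Δ and let α, β ∈ Δ \ S be distinct. Then ⟨pr_S α, pr_S β⟩ ≠ 0 if and only if there exists a subset Ψ ⊆ S such that Ψ ∪ {α, β} is connected, where a finite set of vectors is called connected if the graph on it joining two vectors exactly when they are non-orthogonal is connected. -/
noncomputable section

open scoped RealInnerProductSpace

variable {V : Type*} [NormedAddCommGroup V] [InnerProductSpace ℝ V] [FiniteDimensional ℝ V]

/-- A finite set of vectors is connected if the graph on it joining two vectors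
exactly when they are non-orthogonal is connected. -/
def nonOrthConnected {V : Type*} [NormedAddCommGroup V] [InnerProductSpace ℝ V]
    (T : Set V) : Prop :=
  ∀ x ∈ T, ∀ y ∈ T, Relation.ReflTransGen (fun a b => a ∈ T ∧ b ∈ T ∧ ⟪a, b⟫ ≠ 0) x y

/-! For `γ ∈ Δ \ S` put `u = pr S γ`. Enlarging `S` by `γ` projects away `u` as well, so
`⟪pr (S ∪ {γ}) α, pr (S ∪ {γ}) β⟫ = ⟪pr S α, pr S β⟫ - ⟪pr S α, u⟫ ⟪u, pr S β⟫ / ‖u‖²`.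
Distinct simple roots are obtuse, and by this formula and induction on `S` so are their
projections. Hence the new pairing is nonzero iff `⟪pr S α, pr S β⟫ ≠ 0` or both `⟪pr S α, u⟫` and
`⟪u, pr S β⟫` are nonzero: the recursion obeyed by non-orthogonal paths from `α` to `β` through
`S ∪ {γ}`, split at their last visit of `γ`. -/

section NonOrthogonalPaths

variable {E : Type*} [NormedAddCommGroup E] [InnerProductSpace ℝ E]

open Relation

def NonOrthStep (S : Set E) (a b : E) : Prop := b ∈ S ∧ ⟪a, b⟫ ≠ 0

/-- A path `α, x₁, …, xₙ, β` with consecutive vertices non-orthogonal and all `xᵢ ∈ S`. -/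
def NonOrthJoined (S : Set E) (α β : E) : Prop :=
  ∃ c, ReflTransGen (NonOrthStep S) α c ∧ ⟪c, β⟫ ≠ 0

lemma NonOrthStep.mono {S T : Set E} (hST : S ⊆ T) {a b : E} (h : NonOrthStep S a b) :
    NonOrthStep T a b :=
  ⟨hST h.1, h.2⟩

lemma NonOrthJoined.mono {S T : Set E} (hST : S ⊆ T) {α β : E} (h : NonOrthJoined S α β) :
    NonOrthJoined T α β :=
  let ⟨c, hαc, hcβ⟩ := h
  ⟨c, ReflTransGen.mono (fun _ _ ↦ NonOrthStep.mono hST) _ _ hαc, hcβ⟩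

lemma NonOrthJoined.head {S : Set E} {a c β : E} (hac : NonOrthStep S a c)
    (h : NonOrthJoined S c β) : NonOrthJoined S a β :=
  let ⟨d, hcd, hdβ⟩ := h
  ⟨d, hcd.head hac, hdβ⟩

lemma nonOrthJoined_empty {α β : E} : NonOrthJoined ∅ α β ↔ ⟪α, β⟫ ≠ 0 := by
  refine ⟨fun ⟨c, hαc, hcβ⟩ ↦ ?_, fun h ↦ ⟨α, .refl, h⟩⟩
  rcases hαc.cases_tail with rfl | ⟨_, _, hstep⟩
  · exact hcβ
  · exact absurd hstep.1 (Set.notMem_empty c)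

lemma nonOrthJoined_insert_iff {S : Set E} {γ α β : E} :
    NonOrthJoined (insert γ S) α β ↔
      NonOrthJoined S α β ∨ NonOrthJoined S α γ ∧ NonOrthJoined S γ β := by
  constructor
  · rintro ⟨c, hαc, hcβ⟩
    -- split the path at its last visit of `γ`
    induction hαc using ReflTransGen.head_induction_on with
    | refl => exact Or.inl ⟨c, .refl, hcβ⟩
    | @head a a' haa' _ ih =>
      obtain ⟨rfl | ha'S, hinner⟩ := haa'
      · exact Or.inr ⟨⟨a, .refl, hinner⟩, ih.elim id And.right⟩
      · have hstep : NonOrthStep S a a' := ⟨ha'S, hinner⟩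
        exact ih.imp (·.head hstep) (And.imp_left (·.head hstep))
  · rintro (h | ⟨⟨c₁, h₁, hc₁⟩, ⟨c₂, h₂, hc₂⟩⟩)
    · exact h.mono (Set.subset_insert γ S)
    · have hins : ∀ {a b}, NonOrthStep S a b → NonOrthStep (insert γ S) a b :=
        NonOrthStep.mono (Set.subset_insert γ S)
      exact ⟨c₂, ((ReflTransGen.mono (fun _ _ ↦ hins) _ _ h₁).tail ⟨Set.mem_insert γ S, hc₁⟩).trans
        (ReflTransGen.mono (fun _ _ ↦ hins) _ _ h₂), hc₂⟩

lemma NonOrthJoined.of_insert_left {S : Set E} {α β : E}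
    (h : NonOrthJoined (insert α S) α β) : NonOrthJoined S α β :=
  (nonOrthJoined_insert_iff.1 h).elim id And.right

lemma NonOrthJoined.of_insert_right {S : Set E} {α β : E}
    (h : NonOrthJoined (insert β S) α β) : NonOrthJoined S α β :=
  (nonOrthJoined_insert_iff.1 h).elim id And.left

lemma nonOrthConnected_of_forall_reflTransGen {T : Set E} {α : E}
    (h : ∀ y ∈ T, ReflTransGen (fun a b ↦ a ∈ T ∧ b ∈ T ∧ ⟪a, b⟫ ≠ 0) α y) :
    nonOrthConnected T := by
  intro x hx y hy
  have hsymm : ReflTransGen (fun a b ↦ a ∈ T ∧ b ∈ T ∧ ⟪a, b⟫ ≠ 0) x α :=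
    ReflTransGen.mono (fun a b hab ↦ ⟨hab.2.1, hab.1, by rw [real_inner_comm]; exact hab.2.2⟩)
      _ _ (h x hx).swap
  exact hsymm.trans (h y hy)

lemma nonOrthJoined_iff_exists_nonOrthConnected {S : Set E} {α β : E} (hαβ : α ≠ β) :
    NonOrthJoined S α β ↔ ∃ Ψ : Set E, Ψ ⊆ S ∧ nonOrthConnected (Ψ ∪ {α, β}) := by
  constructor
  · rintro ⟨c, hαc, hcβ⟩
    set Ψ := {x ∈ S | ReflTransGen (NonOrthStep S) α x}
    set T := Ψ ∪ {α, β}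
    refine ⟨Ψ, Set.sep_subset _ _, nonOrthConnected_of_forall_reflTransGen (α := α) ?_⟩
    have hmem : ∀ {b}, ReflTransGen (NonOrthStep S) α b → b ∈ T := fun hαb ↦ by
      rcases hαb.cases_tail with rfl | ⟨_, _, hb⟩
      · simp [T]
      · exact Or.inl ⟨hb.1, hαb⟩
    have hreach : ∀ {y}, ReflTransGen (NonOrthStep S) α y →
        ReflTransGen (fun a b ↦ a ∈ T ∧ b ∈ T ∧ ⟪a, b⟫ ≠ 0) α y := fun hαy ↦ by
      induction hαy with
      | refl => exact .refl
      | @tail b d hαb hbd ih => exact ih.tail ⟨hmem hαb, hmem (hαb.tail hbd), hbd.2⟩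
    rintro y ((⟨-, hαy⟩ | rfl | rfl) : y ∈ T)
    · exact hreach hαy
    · exact .refl
    · exact (hreach hαc).tail ⟨hmem hαc, by simp [T], hcβ⟩
  · rintro ⟨Ψ, hΨS, hconn⟩
    obtain rfl | ⟨c, hαc, hcβ⟩ := (hconn α (by simp) β (by simp)).cases_tail
    · exact absurd rfl hαβ
    have hjoined : NonOrthJoined (insert α (insert β Ψ)) α β :=
      ⟨c, ReflTransGen.mono (fun a b hab ↦ ⟨by simpa using hab.2.1, hab.2.2⟩) _ _ hαc, hcβ.2.2⟩
    exact (hjoined.of_insert_left.of_insert_right).mono hΨS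

end NonOrthogonalPaths

section Projection

variable {E : Type*} [NormedAddCommGroup E] [InnerProductSpace ℝ E] [FiniteDimensional ℝ E]

lemma pr_mem_orthogonal (S : Set E) (v : E) : pr S v ∈ (Submodule.span ℝ S)ᗮ :=
  (Submodule.orthogonalProjectionOnto _ v).2

lemma pr_empty (v : E) : pr (∅ : Set E) v = v := by
  simp [pr, Submodule.starProjection_top]

lemma pr_eq_zero_iff {S : Set E} {v : E} : pr S v = 0 ↔ v ∈ Submodule.span ℝ S := by
  rw [pr, ← Submodule.starProjection_apply, Submodule.starProjection_apply_eq_zero_iff,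
    Submodule.orthogonal_orthogonal]

lemma sub_pr_mem_span (S : Set E) (v : E) : v - pr S v ∈ Submodule.span ℝ S := by
  simp [pr]

lemma inner_pr_left_of_mem_orthogonal {S : Set E} {w : E} (hw : w ∈ (Submodule.span ℝ S)ᗮ)
    (v : E) : ⟪pr S v, w⟫ = ⟪v, w⟫ := by
  rw [pr, ← Submodule.starProjection_apply, Submodule.inner_starProjection_left_eq_right,
    Submodule.starProjection_eq_self_iff.2 hw]

lemma pr_insert (S : Set E) (γ v : E) :
    pr (insert γ S) v = pr S v - (⟪pr S v, pr S γ⟫ / ⟪pr S γ, pr S γ⟫) • pr S γ := by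
  set u := pr S γ
  set w := pr S v - (⟪pr S v, u⟫ / ⟪u, u⟫) • u
  have hw : w ∈ (Submodule.span ℝ (insert γ S))ᗮ := by
    have hwS : w ∈ (Submodule.span ℝ S)ᗮ :=
      Submodule.sub_mem _ (pr_mem_orthogonal S v) (Submodule.smul_mem _ _ (pr_mem_orthogonal S γ))
    rw [Submodule.span_insert, ← Submodule.inf_orthogonal]
    refine ⟨Submodule.mem_orthogonal_singleton_iff_inner_right.2 ?_, hwS⟩
    rw [← inner_pr_left_of_mem_orthogonal hwS, inner_sub_right, real_inner_smul_right,
      real_inner_comm u (pr S v), div_mul_cancel_of_imp (fun huu ↦ by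
        simp [inner_self_eq_zero.1 huu]), sub_self]
  have hvw : v - w ∈ Submodule.span ℝ (insert γ S) := by
    have hS : Submodule.span ℝ S ≤ Submodule.span ℝ (insert γ S) :=
      Submodule.span_mono (Set.subset_insert γ S)
    have hu : u ∈ Submodule.span ℝ (insert γ S) := by
      simpa using Submodule.sub_mem _ (Submodule.subset_span (Set.mem_insert γ S))
        (hS (sub_pr_mem_span S γ))
    rw [show v - w = (v - pr S v) + (⟪pr S v, u⟫ / ⟪u, u⟫) • u by simp only [w]; abel]
    exact Submodule.add_mem _ (hS (sub_pr_mem_span S v)) (Submodule.smul_mem _ _ hu)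
  rw [← Submodule.orthogonal_orthogonal (Submodule.span ℝ (insert γ S))] at hvw
  rw [pr, ← Submodule.starProjection_apply]
  exact Submodule.eq_starProjection_of_mem_orthogonal hw hvw

lemma inner_pr_insert (S : Set E) (γ x y : E) :
    ⟪pr (insert γ S) x, pr (insert γ S) y⟫ =
      ⟪pr S x, pr S y⟫ - ⟪pr S x, pr S γ⟫ * ⟪pr S γ, pr S y⟫ / ⟪pr S γ, pr S γ⟫ := by
  rcases eq_or_ne (pr S γ) 0 with hγ | hγ
  · simp [pr_insert, hγ]
  have hγγ : ⟪pr S γ, pr S γ⟫ ≠ 0 := inner_self_ne_zero.2 hγ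
  simp only [pr_insert, inner_sub_left, inner_sub_right, real_inner_smul_left,
    real_inner_smul_right, real_inner_comm (pr S γ)]
  field_simp
  ring

end Projection

lemma sub_mul_div_ne_zero_iff {a b c d : ℝ} (ha : a ≤ 0) (hb : b ≤ 0) (hc : c ≤ 0) (hd : 0 < d) :
    a - b * c / d ≠ 0 ↔ a ≠ 0 ∨ b ≠ 0 ∧ c ≠ 0 := by
  have hbcd : 0 ≤ b * c / d := div_nonneg (mul_nonneg_of_nonpos_of_nonpos hb hc) hd.le
  constructor
  · intro hne
    by_contra! h0
    rcases eq_or_ne b 0 with hb0 | hb0 <;> simp_all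
  · rintro (ha0 | ⟨hb0, hc0⟩)
    · have := lt_of_le_of_ne ha ha0
      linarith
    · have := div_pos (mul_pos_of_neg_of_neg (lt_of_le_of_ne hb hb0) (lt_of_le_of_ne hc hc0)) hd
      linarith

section RootBase

variable {E : Type*} [NormedAddCommGroup E] [InnerProductSpace ℝ E] {Φ Δ Φpos : Finset E}

lemma IsRootBase.coeff_nonneg (h : IsRootBase Φ Δ Φpos) {γ : E} (hγ : γ ∈ Φpos) {g : E → ℝ}
    (hg : γ = ∑ x ∈ Δ, g x • x) {x : E} (hx : x ∈ Δ) : 0 ≤ g x := by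
  obtain ⟨c, hc, hγc⟩ := h.pos_comb γ hγ
  have hindep : LinearIndepOn ℝ id (Δ : Set E) := h.indep
  have hcg := linearIndepOn_finset_iff.1 hindep (c - g)
    (by simp only [Pi.sub_apply, sub_smul, Finset.sum_sub_distrib, id, ← hγc, ← hg, sub_self]) x hx
  linarith [hc x hx, sub_eq_zero.1 hcg]

lemma IsRootBase.inner_nonpos (h : IsRootBase Φ Δ Φpos) {α β : E} (hα : α ∈ Δ) (hβ : β ∈ Δ)
    (hαβ : α ≠ β) : ⟪α, β⟫ ≤ 0 := by
  classical
  by_contra! hpos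
  have hαΦ : α ∈ Φ := h.pos_subset (h.base_subset_pos hα)
  have hαα : 0 < ⟪α, α⟫ := real_inner_self_pos.2 fun h0 ↦ h.zero_not_mem (h0 ▸ hαΦ)
  set c := 2 * ⟪β, α⟫ / ⟪α, α⟫
  have hc : 0 < c := div_pos (by rw [real_inner_comm]; linarith) hαα
  have hsum (a b : ℝ) :
      a • α + b • β = ∑ x ∈ Δ, (Pi.single α a + Pi.single β b : E → ℝ) x • x := by
    simp [add_smul, Finset.sum_add_distrib, Pi.single_apply, ite_smul, hα, hβ]
  -- the reflection `β - c • α` of `β` in `α` is a root with coefficients of both signs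
  rcases h.mem_or_neg_mem _ (h.refl_mem α hαΦ β (h.pos_subset (h.base_subset_pos hβ))) with
    hpos | hneg
  · have := h.coeff_nonneg hpos (by rw [← hsum (-c) 1]; simp [sRefl, c]; abel) hα
    simp [hαβ] at this
    linarith
  · have := h.coeff_nonneg hneg (by rw [← hsum c (-1)]; simp [sRefl, c, sub_eq_add_neg]) hβ
    norm_num [hαβ] at this

end RootBase

section RootBaseProjection

variable {E : Type*} [NormedAddCommGroup E] [InnerProductSpace ℝ E] [FiniteDimensional ℝ E]
  {Φ Δ Φpos : Finset E}

lemma IsRootBase.pr_ne_zero (h : IsRootBase Φ Δ Φpos) {S : Set E} (hS : S ⊆ Δ) {γ : E}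
    (hγ : γ ∈ (Δ : Set E) \ S) : pr S γ ≠ 0 := by
  rw [ne_eq, pr_eq_zero_iff]
  have hindep : LinearIndepOn ℝ id (insert γ S) :=
    LinearIndepOn.mono h.indep (Set.insert_subset hγ.1 hS)
  exact ((linearIndepOn_id_insert hγ.2).1 hindep).2

lemma IsRootBase.inner_pr_nonpos (h : IsRootBase Φ Δ Φpos) {S : Set E} (hS : S ⊆ Δ) {α β : E}
    (hα : α ∈ (Δ : Set E) \ S) (hβ : β ∈ (Δ : Set E) \ S) (hαβ : α ≠ β) :
    ⟪pr S α, pr S β⟫ ≤ 0 := by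
  induction S, Δ.finite_toSet.subset hS using Set.Finite.induction_on generalizing α β with
  | empty => simpa [pr_empty] using h.inner_nonpos hα.1 hβ.1 hαβ
  | @insert γ S hγS _ ih =>
    have hS' : S ⊆ Δ := (Set.subset_insert γ S).trans hS
    have hγ : γ ∈ (Δ : Set E) \ S := ⟨hS (Set.mem_insert γ S), hγS⟩
    have hα' : α ∈ (Δ : Set E) \ S := Set.sdiff_subset_sdiff_right (Set.subset_insert γ S) hα
    have hβ' : β ∈ (Δ : Set E) \ S := Set.sdiff_subset_sdiff_right (Set.subset_insert γ S) hβ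
    have hB := ih hS' hα' hγ fun e ↦ hα.2 (e ▸ Set.mem_insert γ S)
    have hC := ih hS' hγ hβ' fun e ↦ hβ.2 (e ▸ Set.mem_insert γ S)
    have hD := real_inner_self_nonneg (x := pr S γ)
    rw [inner_pr_insert]
    have := div_nonneg (mul_nonneg_of_nonpos_of_nonpos hB hC) hD
    linarith [ih hS' hα' hβ' hαβ]

lemma IsRootBase.inner_pr_ne_zero_iff (h : IsRootBase Φ Δ Φpos) {S : Set E} (hS : S ⊆ Δ)
    {α β : E} (hα : α ∈ (Δ : Set E) \ S) (hβ : β ∈ (Δ : Set E) \ S) (hαβ : α ≠ β) :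
    ⟪pr S α, pr S β⟫ ≠ 0 ↔ NonOrthJoined S α β := by
  induction S, Δ.finite_toSet.subset hS using Set.Finite.induction_on generalizing α β with
  | empty => rw [pr_empty, pr_empty, nonOrthJoined_empty]
  | @insert γ S hγS _ ih =>
    have hS' : S ⊆ Δ := (Set.subset_insert γ S).trans hS
    have hγ : γ ∈ (Δ : Set E) \ S := ⟨hS (Set.mem_insert γ S), hγS⟩
    have hα' : α ∈ (Δ : Set E) \ S := Set.sdiff_subset_sdiff_right (Set.subset_insert γ S) hα
    have hβ' : β ∈ (Δ : Set E) \ S := Set.sdiff_subset_sdiff_right (Set.subset_insert γ S) hβ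
    have hαγ : α ≠ γ := fun e ↦ hα.2 (e ▸ Set.mem_insert γ S)
    have hγβ : γ ≠ β := fun e ↦ hβ.2 (e ▸ Set.mem_insert γ S)
    rw [inner_pr_insert, sub_mul_div_ne_zero_iff (h.inner_pr_nonpos hS' hα' hβ' hαβ)
      (h.inner_pr_nonpos hS' hα' hγ hαγ) (h.inner_pr_nonpos hS' hγ hβ' hγβ)
      (real_inner_self_pos.2 (h.pr_ne_zero hS' hγ)), ih hS' hα' hβ' hαβ, ih hS' hα' hγ hαγ,
      ih hS' hγ hβ' hγβ, nonOrthJoined_insert_iff]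

end RootBaseProjection

/-- combinatorial fact in the proof of Lemma 20.1 of the paper.
For `S ⊆ Δ` and distinct `α, β ∈ Δ \ S`: `⟨pr_S α, pr_S β⟩ ≠ 0` iff there is
`Ψ ⊆ S` with `Ψ ∪ {α, β}` connected for the non-orthogonality graph. -/
theorem restrictedRootsPairing
    {V : Type*} [NormedAddCommGroup V] [InnerProductSpace ℝ V] [FiniteDimensional ℝ V]
    (Φ Δ Φpos : Finset V) (h : IsRootBase Φ Δ Φpos)
    (S : Set V) (hS : S ⊆ (Δ : Set V))
    (α β : V) (hα : α ∈ (Δ : Set V) \ S) (hβ : β ∈ (Δ : Set V) \ S) (hαβ : α ≠ β) :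
    ⟪pr S α, pr S β⟫ ≠ 0 ↔ ∃ Ψ : Set V, Ψ ⊆ S ∧ nonOrthConnected (Ψ ∪ {α, β}) := by
  rw [h.inner_pr_ne_zero_iff hS hα hβ hαβ, nonOrthJoined_iff_exists_nonOrthConnected hαβ]
end
end

section
/- Let S ⊆ S′ ⊆ Δ satisfy ω(S) ∩ S′ = S. Then: (a) ω(S′) ⊆ ω(S) ∪ S′; (b) for every α ∈ ω(S′) \ S′, the orthogonal projections of α onto the orthogonal complement of span(S) and onto the orthogonal complement of span(S′) coincide, i.e. pr_S α = pr_{S′} α; and (c) consequently ⟨λ, pr_{S′}(α∨)⟩ = ⟨λ, pr_S(α∨)⟩ for every λ ∈ V and every α ∈ ω(S′) \ S′. -/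
noncomputable section

open scoped RealInnerProductSpace

variable {V : Type*} [NormedAddCommGroup V] [InnerProductSpace ℝ V] [FiniteDimensional ℝ V]

/-- `Θ` is σ-connected (relative to the highest weight `μ₀`): the non-orthogonality
graph on `Θ ∪ {μ₀}` is connected. -/
def sigmaConn {V : Type*} [NormedAddCommGroup V] [InnerProductSpace ℝ V]
    (μ₀ : V) (Θ : Set V) : Prop :=
  nonOrthConnected (insert μ₀ Θ)

/-- `κ(Θ)`: the union of all σ-connected subsets of `Θ`
(the largest σ-connected subset of `Θ`). -/
def kap {V : Type*} [NormedAddCommGroup V] [InnerProductSpace ℝ V]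
    (μ₀ : V) (Θ : Set V) : Set V :=
  ⋃₀ {Υ : Set V | Υ ⊆ Θ ∧ sigmaConn μ₀ Υ}

/-- `ω(Θ)`: the union of all `Υ ⊆ Δ` with `κ(Υ) = κ(Θ)` (the largest such subset). -/
def om {V : Type*} [NormedAddCommGroup V] [InnerProductSpace ℝ V]
    (μ₀ : V) (Δ : Finset V) (Θ : Set V) : Set V :=
  ⋃₀ {Υ : Set V | Υ ⊆ (Δ : Set V) ∧ kap μ₀ Υ = kap μ₀ Θ}

/-! A vector `α ∈ Υ` non-orthogonal to `μ₀` or to `κ(Υ)` lies in `κ(Υ)`; hence a simple root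
`α ∉ Θ` lies in `ω(Θ)` exactly when it is orthogonal to `μ₀` and to `κ(Θ)`, and as
`κ(S) ⊆ κ(S′)`, this puts `ω(S′) \ S′` inside `ω(S)`. The hypothesis `ω(S) ∩ S′ = S` forces
`S′ \ S ⊆ κ(S′)`, so `span S′` is the orthogonal sum of `span κ(S′)`, to which `α` is orthogonal,
and `span (S \ κ(S′)) ≤ span S`. Hence the components of `α` in `span S` and in `span S′` agree. -/

section Kappa

variable {V : Type*} [NormedAddCommGroup V] [InnerProductSpace ℝ V] {μ₀ α v x : V}
  {Θ Υ : Set V}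

def nonOrthAdj (T : Set V) (a b : V) : Prop := a ∈ T ∧ b ∈ T ∧ ⟪a, b⟫ ≠ 0

instance (T : Set V) : Std.Symm (nonOrthAdj T) :=
  ⟨fun _ _ ⟨ha, hb, h⟩ => ⟨hb, ha, by rwa [real_inner_comm]⟩⟩

theorem mem_kap_iff :
    x ∈ kap μ₀ Θ ↔ x ∈ Θ ∧ Relation.ReflTransGen (nonOrthAdj (insert μ₀ Θ)) x μ₀ := by
  constructor
  · rintro ⟨Υ, ⟨hΥΘ, hconn⟩, hxΥ⟩
    exact ⟨hΥΘ hxΥ, Relation.ReflTransGen.mono (fun a b ⟨ha, hb, hab⟩ =>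
      ⟨Set.insert_subset_insert hΥΘ ha, Set.insert_subset_insert hΥΘ hb, hab⟩) _ _
      (hconn x (Set.mem_insert_of_mem _ hxΥ) μ₀ (Set.mem_insert _ _))⟩
  · rintro ⟨hxΘ, hx⟩
    set Υ : Set V := {y | y ∈ Θ ∧ Relation.ReflTransGen (nonOrthAdj (insert μ₀ Θ)) y μ₀}
    have mem_insert_Υ : ∀ w ∈ insert μ₀ Θ,
        Relation.ReflTransGen (nonOrthAdj (insert μ₀ Θ)) w μ₀ → w ∈ insert μ₀ Υ := by
      rintro w (rfl | hw) hwμ₀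
      · exact Set.mem_insert _ _
      · exact Set.mem_insert_of_mem _ ⟨hw, hwμ₀⟩
    -- every vertex of a path to `μ₀` is itself joined to `μ₀`, so the path stays in `Υ`
    have reach : ∀ z, Relation.ReflTransGen (nonOrthAdj (insert μ₀ Θ)) z μ₀ →
        Relation.ReflTransGen (nonOrthAdj (insert μ₀ Υ)) z μ₀ := by
      intro z hz
      induction hz using Relation.ReflTransGen.head_induction_on with
      | refl => exact .refl
      | head hzc hc ih =>
        exact .head ⟨mem_insert_Υ _ hzc.1 (.head hzc hc), mem_insert_Υ _ hzc.2.1 hc, hzc.2.2⟩ ih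
    have reach_Υ : ∀ a ∈ insert μ₀ Υ, Relation.ReflTransGen (nonOrthAdj (insert μ₀ Υ)) a μ₀ := by
      rintro a (rfl | ha)
      · exact .refl
      · exact reach a ha.2
    refine ⟨Υ, ⟨fun y hy => hy.1, fun a ha b hb => ?_⟩, hxΘ, hx⟩
    exact (reach_Υ a ha).trans (symm (reach_Υ b hb))

theorem mem_insert_kap_iff : x ∈ insert μ₀ (kap μ₀ Θ) ↔
    x ∈ insert μ₀ Θ ∧ Relation.ReflTransGen (nonOrthAdj (insert μ₀ Θ)) x μ₀ := by
  rcases eq_or_ne x μ₀ with rfl | hx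
  · exact iff_of_true (Set.mem_insert _ _) ⟨Set.mem_insert _ _, .refl⟩
  · simp only [Set.mem_insert_iff, hx, false_or, mem_kap_iff]

theorem kap_subset (μ₀ : V) (Θ : Set V) : kap μ₀ Θ ⊆ Θ :=
  Set.sUnion_subset fun _ hΥ => hΥ.1

theorem kap_mono (h : Θ ⊆ Υ) : kap μ₀ Θ ⊆ kap μ₀ Υ :=
  Set.sUnion_subset fun _ hΥ' => Set.subset_sUnion_of_mem ⟨hΥ'.1.trans h, hΥ'.2⟩

theorem mem_kap_of_inner_ne_zero (hα : α ∈ Θ) (hv : v ∈ insert μ₀ (kap μ₀ Θ))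
    (hαv : ⟪α, v⟫ ≠ 0) : α ∈ kap μ₀ Θ := by
  obtain ⟨hvΘ, hvμ₀⟩ := mem_insert_kap_iff.1 hv
  exact mem_kap_iff.2 ⟨hα, .head ⟨Set.mem_insert_of_mem _ hα, hvΘ, hαv⟩ hvμ₀⟩

theorem inner_eq_zero_of_notMem_kap (hα : α ∈ Θ) (hαΘ : α ∉ kap μ₀ Θ)
    (hv : v ∈ kap μ₀ Θ) : ⟪v, α⟫ = 0 := by
  by_contra hvα
  exact hαΘ (mem_kap_of_inner_ne_zero hα (Set.mem_insert_of_mem _ hv)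
    (by rwa [real_inner_comm]))

theorem kap_insert_of_inner_eq_zero (hμ₀ : μ₀ ≠ 0)
    (hα : ∀ v ∈ insert μ₀ (kap μ₀ Θ), ⟪α, v⟫ = 0) : kap μ₀ (insert α Θ) = kap μ₀ Θ := by
  refine (kap_mono (Set.subset_insert _ _)).antisymm' fun x hx => ?_
  obtain ⟨hxΘ, hxμ₀⟩ := mem_kap_iff.1 hx
  -- no edge of the larger graph leaves `{μ₀} ∪ κ(Θ)`, since `α` is orthogonal to all of it
  have closed : ∀ z, Relation.ReflTransGen (nonOrthAdj (insert μ₀ (insert α Θ))) μ₀ z →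
      z ∈ insert μ₀ (kap μ₀ Θ) := by
    intro z hz
    induction hz with
    | refl => exact Set.mem_insert _ _
    | tail _ hbc ih =>
      obtain ⟨-, hc, hbc⟩ := hbc
      rcases hc with rfl | rfl | hc
      · exact Set.mem_insert _ _
      · exact absurd (by rw [real_inner_comm]; exact hα _ ih) hbc
      · exact Set.mem_insert_of_mem _
          (mem_kap_of_inner_ne_zero hc ih (by rwa [real_inner_comm]))
  rcases closed x (symm hxμ₀) with rfl | hx
  · rcases hxΘ with rfl | hxΘ
    · exact absurd (inner_self_eq_zero.1 (hα _ (Set.mem_insert _ _))) hμ₀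
    · exact mem_kap_iff.2 ⟨hxΘ, .refl⟩
  · exact hx

end Kappa

section Omega

variable {V : Type*} [NormedAddCommGroup V] [InnerProductSpace ℝ V] {μ₀ α : V} {Δ : Finset V}
  {Θ S S' : Set V}

theorem mem_om_iff :
    α ∈ om μ₀ Δ Θ ↔ ∃ Υ ⊆ (Δ : Set V), kap μ₀ Υ = kap μ₀ Θ ∧ α ∈ Υ := by
  simp only [om, Set.mem_sUnion, Set.mem_ofPred_eq, and_assoc]

theorem om_subset : om μ₀ Δ Θ ⊆ Δ :=
  Set.sUnion_subset fun _ hΥ => hΥ.1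

theorem inner_eq_zero_of_mem_om_diff (hα : α ∈ om μ₀ Δ Θ \ Θ) :
    ∀ v ∈ insert μ₀ (kap μ₀ Θ), ⟪α, v⟫ = 0 := by
  obtain ⟨⟨Υ, hΥΔ, hΥΘ, hαΥ⟩, hαΘ⟩ := And.imp_left mem_om_iff.1 hα
  intro v hv
  by_contra hαv
  rw [← hΥΘ] at hv
  exact hαΘ (kap_subset μ₀ Θ (hΥΘ ▸ mem_kap_of_inner_ne_zero hαΥ hv hαv))

theorem mem_om_of_inner_eq_zero (hμ₀ : μ₀ ≠ 0) (hαΔ : α ∈ Δ) (hΘΔ : Θ ⊆ Δ)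
    (hα : ∀ v ∈ insert μ₀ (kap μ₀ Θ), ⟪α, v⟫ = 0) : α ∈ om μ₀ Δ Θ :=
  mem_om_iff.2 ⟨insert α Θ, Set.insert_subset hαΔ hΘΔ, kap_insert_of_inner_eq_zero hμ₀ hα,
    Set.mem_insert _ _⟩

theorem diff_subset_kap_of_om_inter_eq (hμ₀ : μ₀ ≠ 0) (hSS' : S ⊆ S') (hS' : S' ⊆ Δ)
    (hωS : om μ₀ Δ S ∩ S' = S) : S' \ S ⊆ kap μ₀ S' := by
  rintro β ⟨hβS', hβS⟩
  by_cases hβ : ∀ v ∈ insert μ₀ (kap μ₀ S), ⟪β, v⟫ = 0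
  · exact absurd (hωS ▸ ⟨mem_om_of_inner_eq_zero hμ₀ (hS' hβS') (hSS'.trans hS') hβ, hβS'⟩) hβS
  · push Not at hβ
    obtain ⟨v, hv, hβv⟩ := hβ
    exact mem_kap_of_inner_ne_zero hβS' (Set.insert_subset_insert (kap_mono hSS') hv) hβv

end Omega

section Projection

variable {V : Type*} [NormedAddCommGroup V] [InnerProductSpace ℝ V] {s : Set V} {v : V}

theorem mem_orthogonal_span_iff : v ∈ (Submodule.span ℝ s)ᗮ ↔ ∀ u ∈ s, ⟪u, v⟫ = 0 := by
  refine ⟨fun h u hu => (Submodule.mem_orthogonal _ _).1 h u (Submodule.subset_span hu),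
    fun h => ?_⟩
  have : Submodule.span ℝ s ⟂ Submodule.span ℝ {v} :=
    Submodule.isOrtho_span.2 fun u hu w hw => by rw [Set.mem_singleton_iff.1 hw]; exact h u hu
  exact Submodule.isOrtho_iff_le.1 this.symm (Submodule.mem_span_singleton_self v)

variable [FiniteDimensional ℝ V]

theorem pr_smul (S : Set V) (c : ℝ) (v : V) : pr S (c • v) = c • pr S v := by
  simp only [pr, map_smul, Submodule.coe_smul]

theorem pr_eq_sub {S : Set V} {p : V} (hp : p ∈ Submodule.span ℝ S)
    (hvp : v - p ∈ (Submodule.span ℝ S)ᗮ) : pr S v = v - p := by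
  rw [pr, Submodule.coe_orthogonalProjectionOnto_apply, Submodule.starProjection_orthogonal_val,
    Submodule.eq_starProjection_of_mem_orthogonal hp hvp]

theorem pr_eq_pr_of_subset_union {S S' K T : Set V} (hTS : T ⊆ S) (hSS' : S ⊆ S')
    (hS' : S' ⊆ K ∪ T) (hKT : ∀ k ∈ K, ∀ t ∈ T, ⟪k, t⟫ = 0) (hv : ∀ k ∈ K, ⟪k, v⟫ = 0) :
    pr S v = pr S' v := by
  set N := Submodule.span ℝ T
  set p := N.starProjection v
  have hpK : p ∈ (Submodule.span ℝ K)ᗮ :=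
    Submodule.isOrtho_iff_le.1 (Submodule.isOrtho_span.2 hKT).symm (N.starProjection_apply_mem v)
  have hvp : v - p ∈ (Submodule.span ℝ S')ᗮ := by
    refine Submodule.orthogonal_le (Submodule.span_mono hS') ?_
    rw [Submodule.span_union, ← Submodule.inf_orthogonal]
    exact ⟨sub_mem (mem_orthogonal_span_iff.2 hv) hpK, N.sub_starProjection_mem_orthogonal v⟩
  have hpS : p ∈ Submodule.span ℝ S := Submodule.span_mono hTS (N.starProjection_apply_mem v)
  rw [pr_eq_sub hpS (Submodule.orthogonal_le (Submodule.span_mono hSS') hvp),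
    pr_eq_sub (Submodule.span_mono hSS' hpS) hvp]

end Projection

theorem transferLemma_general
    {V : Type*} [NormedAddCommGroup V] [InnerProductSpace ℝ V] [FiniteDimensional ℝ V]
    (Δ : Finset V)
    (μ₀ : V) (hμ₀ : μ₀ ≠ 0)
    (S S' : Set V) (hSS' : S ⊆ S') (hS' : S' ⊆ (Δ : Set V))
    (hωS : om μ₀ Δ S ∩ S' = S) :
    om μ₀ Δ S' ⊆ om μ₀ Δ S ∪ S' ∧
    (∀ α ∈ om μ₀ Δ S' \ S', pr S α = pr S' α) ∧
    (∀ lam : V, ∀ α ∈ om μ₀ Δ S' \ S',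
      ⟪lam, pr S' (coroot α)⟫ = ⟪lam, pr S (coroot α)⟫) := by
  have hKS := diff_subset_kap_of_om_inter_eq hμ₀ hSS' hS' hωS
  have partB : ∀ α ∈ om μ₀ Δ S' \ S', pr S α = pr S' α := fun α hα =>
    pr_eq_pr_of_subset_union Set.sdiff_subset hSS'
      (by rw [Set.union_sdiff_self, Set.union_comm]; exact Set.sdiff_subset_iff.1 hKS)
      (fun k hk t ht => inner_eq_zero_of_notMem_kap (hSS' ht.1) ht.2 hk)
      (fun k hk => by
        rw [real_inner_comm]
        exact inner_eq_zero_of_mem_om_diff hα k (Set.mem_insert_of_mem _ hk))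
  refine ⟨fun α hα => ?_, partB, fun lam α hα => ?_⟩
  · by_cases hαS' : α ∈ S'
    · exact Or.inr hαS'
    · refine Or.inl (mem_om_of_inner_eq_zero hμ₀ (om_subset hα) (hSS'.trans hS') fun v hv => ?_)
      exact inner_eq_zero_of_mem_om_diff ⟨hα, hαS'⟩ v
        (Set.insert_subset_insert (kap_mono hSS') hv)
  · rw [coroot, pr_smul, pr_smul, partB α hα]

/-- combinatorial core of Lemma 20.1 of the paper.
Let `S ⊆ S′ ⊆ Δ` with `ω(S) ∩ S′ = S`. Then (a) `ω(S′) ⊆ ω(S) ∪ S′`;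
(b) `pr_S α = pr_{S′} α` for every `α ∈ ω(S′) \ S′`; and (c) consequently
`⟨λ, pr_{S′}(α∨)⟩ = ⟨λ, pr_S(α∨)⟩` for every `λ ∈ V` and `α ∈ ω(S′) \ S′`. -/
theorem transferLemma
    {V : Type*} [NormedAddCommGroup V] [InnerProductSpace ℝ V] [FiniteDimensional ℝ V]
    (Φ Δ Φpos : Finset V) (h : IsRootBase Φ Δ Φpos)
    (μ₀ : V) (hμ₀ : μ₀ ≠ 0) (hdom : ∀ α ∈ Δ, 0 ≤ ⟪μ₀, coroot α⟫)
    (S S' : Set V) (hSS' : S ⊆ S') (hS' : S' ⊆ (Δ : Set V))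
    (hωS : om μ₀ Δ S ∩ S' = S) :
    om μ₀ Δ S' ⊆ om μ₀ Δ S ∪ S' ∧
    (∀ α ∈ om μ₀ Δ S' \ S', pr S α = pr S' α) ∧
    (∀ lam : V, ∀ α ∈ om μ₀ Δ S' \ S',
      ⟪lam, pr S' (coroot α)⟫ = ⟪lam, pr S (coroot α)⟫) :=
  transferLemma_general Δ μ₀ hμ₀ S S' hSS' hS' hωS
end
end
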